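/- Let n ≥ 3 and let ω₁, …, ωₙ ∈ 𝔻 with ω₂ = 0. Let α ∈ ℂ and let Tₙ be the n × n upper-triangular matrix with Tₙ[i,i] = ωᵢ, Tₙ[i,j] = (∏_{k=i+1}^{j−1} (−conj(ω_k)))·√(1 − |ωᵢ|²)·√(1 − |ωⱼ|²) for all i < j with (i,j) ≠ (1,n), Tₙ[1,n] = α, and Tₙ[i,j] = 0 for i > j. Then Tₙ is a contraction if and only if α = 0. -/

import Mathlib

/-!
For `α = 0` the corner entry is the model matrix's own entry there, which contains the factor
`-conj ω₂ = 0`. Adjoining to the model matrix the row `r_j = (∏_{k<j} -conj ω_k) √(1 - |ω_j|²)`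
yields a matrix with orthonormal columns: the Gram entries reduce to the telescoping identity
`∑_{i<j} (1 - |ω_i|²) ∏_{i<k<j} |ω_k|² = 1 - ∏_{k<j} |ω_k|²`. So `Tₙ` is a compression of an
isometry, hence a contraction. Conversely, since `ω₂ = 0` the first row of `Tₙ` is
`(ω₁, √(1 - |ω₁|²), 0, …, 0, α)`, of norm `√(1 + |α|²)`, while every row of a contraction has
norm at most `1`.
-/

open scoped ComplexConjugate

/-- The n×n matrix of Fact 2 (indices written 1-based): the model matrix with eigenvalues
`ω₁, …, ωₙ`, except that the top-right entry `(1,n)` is replaced by `α`. -/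
noncomputable def factMatrixT (n : ℕ) (ω : ℕ → ℂ) (α : ℂ) : Matrix (Fin n) (Fin n) ℂ :=
  Matrix.of fun i j =>
    if (i : ℕ) = (j : ℕ) then ω ((i : ℕ) + 1)
    else if (i : ℕ) < (j : ℕ) then
      if (i : ℕ) = 0 ∧ (j : ℕ) = n - 1 then α
      else
        (∏ k ∈ Finset.Ico ((i : ℕ) + 2) ((j : ℕ) + 1), -(conj (ω k))) *
          ((Real.sqrt (1 - ‖ω ((i : ℕ) + 1)‖ ^ 2) *
            Real.sqrt (1 - ‖ω ((j : ℕ) + 1)‖ ^ 2) : ℝ) : ℂ)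
    else 0

open Finset
open scoped Matrix

namespace Matrix

variable {𝕜 m n : Type*} [RCLike 𝕜] [Fintype m] [Fintype n] [DecidableEq n]

lemma norm_row_le_norm_toEuclideanCLM (A : Matrix n n 𝕜) (i : n) :
    ‖WithLp.toLp 2 (A i)‖ ≤ ‖toEuclideanCLM (𝕜 := 𝕜) A‖ := by
  have hcol : toEuclideanCLM (𝕜 := 𝕜) Aᴴ (EuclideanSpace.single i 1) =
      WithLp.toLp 2 (star (A i)) := by
    ext j
    simp [EuclideanSpace.single]
  calc ‖WithLp.toLp 2 (A i)‖ = ‖toEuclideanCLM (𝕜 := 𝕜) Aᴴ (EuclideanSpace.single i 1)‖ := by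
        simp only [hcol, EuclideanSpace.norm_eq, Pi.star_apply, norm_star]
    _ ≤ ‖toEuclideanCLM (𝕜 := 𝕜) Aᴴ‖ := by
        simpa using (toEuclideanCLM (𝕜 := 𝕜) Aᴴ).le_opNorm (EuclideanSpace.single i 1)
    _ = ‖toEuclideanCLM (𝕜 := 𝕜) A‖ := by
        rw [← star_eq_conjTranspose, map_star, ContinuousLinearMap.star_eq_adjoint,
          ContinuousLinearMap.adjoint.norm_map]

lemma sum_norm_sq_mulVec_of_conjTranspose_mul_self_eq_one {E : Matrix m n 𝕜} (hE : Eᴴ * E = 1)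
    (x : n → 𝕜) : ∑ i, ‖(E *ᵥ x) i‖ ^ 2 = ∑ j, ‖x j‖ ^ 2 := by
  have h : star (E *ᵥ x) ⬝ᵥ (E *ᵥ x) = star x ⬝ᵥ x := by
    rw [star_mulVec, ← dotProduct_mulVec, mulVec_mulVec, hE, one_mulVec]
  simp only [dotProduct, Pi.star_apply, RCLike.star_def, RCLike.conj_mul] at h
  exact_mod_cast h

lemma norm_toEuclideanCLM_submatrix_le_one {E : Matrix m n 𝕜} (hE : Eᴴ * E = 1) {f : n → m}
    (hf : Function.Injective f) : ‖toEuclideanCLM (𝕜 := 𝕜) (E.submatrix f id)‖ ≤ 1 := by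
  classical
  refine ContinuousLinearMap.opNorm_le_bound _ zero_le_one fun x => ?_
  rw [one_mul]
  refine (sq_le_sq₀ (norm_nonneg _) (norm_nonneg _)).mp ?_
  rw [EuclideanSpace.norm_sq_eq, EuclideanSpace.norm_sq_eq,
    ← sum_norm_sq_mulVec_of_conjTranspose_mul_self_eq_one hE x.ofLp]
  calc ∑ i, ‖(toEuclideanCLM (𝕜 := 𝕜) (E.submatrix f id) x) i‖ ^ 2
      = ∑ i ∈ univ.image f, ‖(E *ᵥ x.ofLp) i‖ ^ 2 := by
        rw [sum_image fun _ _ _ _ h => hf h]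
        rfl
    _ ≤ ∑ i, ‖(E *ᵥ x.ofLp) i‖ ^ 2 :=
        sum_le_sum_of_subset_of_nonneg (subset_univ _) fun _ _ _ => by positivity

end Matrix

noncomputable def defect (ω : ℕ → ℂ) (k : ℕ) : ℝ := √(1 - ‖ω k‖ ^ 2)

noncomputable def negConjProd (ω : ℕ → ℂ) (a b : ℕ) : ℂ := ∏ k ∈ Ico a b, -conj (ω k)

noncomputable def modelEntry (ω : ℕ → ℂ) (i j : ℕ) : ℂ :=
  if i = j then ω i
  else if i < j then negConjProd ω (i + 1) j * defect ω i * defect ω j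
  else 0

/-- Rows `0, …, n` and columns `1, …, n` of `modelEntry ω`. When `ω 0 = 0`, row `0` is the row
`(∏_{k<j} -conj ω_k) √(1 - |ω_j|²)` that completes the model matrix to an isometry. -/
noncomputable def extendedModel (n : ℕ) (ω : ℕ → ℂ) : Matrix (Fin (n + 1)) (Fin n) ℂ :=
  Matrix.of fun i j => modelEntry ω i (j + 1)

section Model

variable {ω : ℕ → ℂ}

lemma defect_sq {k : ℕ} (h : ‖ω k‖ ≤ 1) : (defect ω k : ℂ) ^ 2 = 1 - ‖ω k‖ ^ 2 := by
  have : (0 : ℝ) ≤ 1 - ‖ω k‖ ^ 2 := by nlinarith [norm_nonneg (ω k)]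
  rw [defect, ← Complex.ofReal_pow, Real.sq_sqrt this]
  push_cast; ring

lemma negConjProd_eq_neg_conj_mul {a b : ℕ} (h : a < b) :
    negConjProd ω a b = -conj (ω a) * negConjProd ω (a + 1) b :=
  prod_eq_prod_Ico_succ_bot h _

lemma conj_negConjProd_mul {a b c : ℕ} (hab : a ≤ b) (hbc : b ≤ c) :
    conj (negConjProd ω a b) * negConjProd ω a c =
      (∏ k ∈ Ico a b, (‖ω k‖ : ℂ) ^ 2) * negConjProd ω b c := by
  rw [negConjProd, negConjProd, negConjProd, ← prod_Ico_consecutive _ hab hbc, map_prod,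
    ← mul_assoc, ← prod_mul_distrib]
  congr 1
  refine prod_congr rfl fun k _ => ?_
  rw [map_neg, Complex.conj_conj, neg_mul_neg, Complex.mul_conj']

lemma sum_defect_sq_mul_prod {a j : ℕ} (haj : a ≤ j) (hω : ∀ k ∈ Ico a j, ‖ω k‖ ≤ 1) :
    ∑ i ∈ Ico a j, (defect ω i : ℂ) ^ 2 * ∏ k ∈ Ico (i + 1) j, (‖ω k‖ : ℂ) ^ 2 =
      1 - ∏ k ∈ Ico a j, (‖ω k‖ : ℂ) ^ 2 := by
  induction j, haj using Nat.le_induction with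
  | base => simp
  | succ j haj ih =>
    have hj : ‖ω j‖ ≤ 1 := hω j (mem_Ico.2 ⟨haj, j.lt_succ_self⟩)
    rw [sum_Ico_succ_top haj, prod_Ico_succ_top haj, Ico_self, prod_empty, mul_one, defect_sq hj]
    have hsplit : ∀ i ∈ Ico a j, (defect ω i : ℂ) ^ 2 * ∏ k ∈ Ico (i + 1) (j + 1), (‖ω k‖ : ℂ) ^ 2 =
        (defect ω i : ℂ) ^ 2 * (∏ k ∈ Ico (i + 1) j, (‖ω k‖ : ℂ) ^ 2) * (‖ω j‖ : ℂ) ^ 2 :=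
      fun i hi => by rw [prod_Ico_succ_top (mem_Ico.1 hi).2, mul_assoc]
    rw [sum_congr rfl hsplit, ← sum_mul,
      ih fun k hk => hω k (mem_Ico.2 ⟨(mem_Ico.1 hk).1, (mem_Ico.1 hk).2.trans j.lt_succ_self⟩)]
    ring

lemma modelEntry_of_lt {i j : ℕ} (h : i < j) :
    modelEntry ω i j = negConjProd ω (i + 1) j * defect ω i * defect ω j := by
  rw [modelEntry, if_neg h.ne, if_pos h]

lemma modelEntry_of_gt {i j : ℕ} (h : j < i) : modelEntry ω i j = 0 := by
  rw [modelEntry, if_neg h.ne', if_neg h.not_gt]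

lemma sum_range_conj_modelEntry_mul (h0 : ω 0 = 0) {j l : ℕ} (hj : 0 < j) (hjl : j ≤ l)
    (hω : ∀ k < j, ‖ω k‖ ≤ 1) :
    ∑ i ∈ range j, conj (modelEntry ω i j) * modelEntry ω i l =
      negConjProd ω j l * defect ω j * defect ω l := by
  have hterm : ∀ i ∈ range j, conj (modelEntry ω i j) * modelEntry ω i l =
      (defect ω i : ℂ) ^ 2 * (∏ k ∈ Ico (i + 1) j, (‖ω k‖ : ℂ) ^ 2) *
        (negConjProd ω j l * defect ω j * defect ω l) := by
    intro i hi
    have hij := mem_range.1 hi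
    rw [modelEntry_of_lt hij, modelEntry_of_lt (hij.trans_le hjl)]
    simp only [map_mul, Complex.conj_ofReal]
    linear_combination (defect ω i : ℂ) ^ 2 * defect ω j * defect ω l *
      conj_negConjProd_mul (ω := ω) hij hjl
  have hvanish : ∏ k ∈ Ico 0 j, (‖ω k‖ : ℂ) ^ 2 = 0 :=
    prod_eq_zero (mem_Ico.2 ⟨le_rfl, hj⟩) (by simp [h0])
  rw [sum_congr rfl hterm, ← sum_mul, range_eq_Ico,
    sum_defect_sq_mul_prod (Nat.zero_le j) fun k hk => hω k (mem_Ico.1 hk).2, hvanish, sub_zero,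
    one_mul]

lemma conj_modelEntry_self_mul_add {j l : ℕ} (hjl : j ≤ l) (hω : ‖ω j‖ ≤ 1) :
    conj (modelEntry ω j j) * modelEntry ω j l + negConjProd ω j l * defect ω j * defect ω l =
      if j = l then 1 else 0 := by
  have hjj : modelEntry ω j j = ω j := if_pos rfl
  rcases hjl.eq_or_lt with rfl | hlt
  · rw [if_pos rfl, hjj, negConjProd, Ico_self, prod_empty, one_mul, mul_comm, Complex.mul_conj',
      ← sq, defect_sq hω]
    ring
  · rw [if_neg hlt.ne, hjj, modelEntry_of_lt hlt, negConjProd_eq_neg_conj_mul hlt]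
    ring

lemma sum_conj_modelEntry_mul (h0 : ω 0 = 0) {n j l : ℕ} (hj : 0 < j) (hjl : j ≤ l) (hl : l ≤ n)
    (hω : ∀ k ≤ n, ‖ω k‖ ≤ 1) :
    ∑ i ∈ range (n + 1), conj (modelEntry ω i j) * modelEntry ω i l = if j = l then 1 else 0 := by
  have hupper : ∑ i ∈ range (n + 1), conj (modelEntry ω i j) * modelEntry ω i l =
      ∑ i ∈ range (j + 1), conj (modelEntry ω i j) * modelEntry ω i l := by
    refine (sum_subset (range_subset_range.2 (by omega)) fun i _ hi => ?_).symm
    rw [modelEntry_of_gt (by simpa using hi), map_zero, zero_mul]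
  rw [hupper, sum_range_succ, sum_range_conj_modelEntry_mul h0 hj hjl fun k hk => hω k (by omega),
    add_comm]
  exact conj_modelEntry_self_mul_add hjl (hω j (by omega))

lemma conjTranspose_mul_self_extendedModel {n : ℕ} (h0 : ω 0 = 0)
    (hω : ∀ k ≤ n, ‖ω k‖ ≤ 1) : (extendedModel n ω)ᴴ * extendedModel n ω = 1 := by
  have hle : ∀ j l : Fin n, j ≤ l →
      ((extendedModel n ω)ᴴ * extendedModel n ω) j l = (1 : Matrix (Fin n) (Fin n) ℂ) j l := by
    intro j l hjl
    simp only [Matrix.mul_apply, extendedModel, Matrix.conjTranspose_apply, Matrix.of_apply,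
      RCLike.star_def]
    rw [Fin.sum_univ_eq_sum_range (fun i => conj (modelEntry ω i (j + 1)) * modelEntry ω i (l + 1)),
      sum_conj_modelEntry_mul h0 (Nat.succ_pos j) (by simpa using hjl) l.isLt hω, Matrix.one_apply]
    simp [Fin.ext_iff]
  ext j l
  rcases le_total j l with hjl | hlj
  · exact hle j l hjl
  · rw [← (Matrix.isHermitian_conjTranspose_mul_self _).apply, hle l j hlj]
    exact Matrix.isHermitian_one.apply j l

lemma modelEntry_update_zero {i : ℕ} (hi : 0 < i) (j : ℕ) :
    modelEntry (Function.update ω 0 0) i j = modelEntry ω i j := by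
  have hupd : ∀ k, 0 < k → Function.update ω 0 0 k = ω k := fun k hk =>
    Function.update_of_ne hk.ne' _ _
  unfold modelEntry negConjProd defect
  rcases lt_trichotomy i j with hij | rfl | hij
  · rw [if_neg hij.ne, if_pos hij, if_neg hij.ne, if_pos hij, hupd i hi, hupd j (hi.trans hij),
      prod_congr rfl fun k hk => by rw [hupd k ((Nat.succ_pos i).trans_le (mem_Ico.1 hk).1)]]
  · simp [hupd i hi]
  · simp [hij.ne', hij.not_gt]

lemma factMatrixT_zero_eq_submatrix {n : ℕ} (hn : 3 ≤ n) (hω2 : ω 2 = 0) :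
    factMatrixT n ω 0 = (extendedModel n (Function.update ω 0 0)).submatrix Fin.succ id := by
  ext i j
  simp only [Matrix.submatrix_apply, extendedModel, Matrix.of_apply, Fin.val_succ, id,
    modelEntry_update_zero (Nat.succ_pos i)]
  unfold factMatrixT
  rw [Matrix.of_apply]
  rcases lt_trichotomy (i : ℕ) j with hij | hij | hij
  · rw [if_neg hij.ne, if_pos hij, modelEntry_of_lt (by omega)]
    split_ifs with hcorner
    · have h2 : 2 ∈ Ico ((i : ℕ) + 1 + 1) (j + 1) := mem_Ico.2 (by omega)
      rw [negConjProd, prod_eq_zero h2 (by simp [hω2])]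
      simp
    · simp [negConjProd, defect, mul_assoc]
  · simp [hij, modelEntry]
  · rw [if_neg hij.ne', if_neg hij.not_gt, modelEntry_of_gt (by omega)]

lemma norm_sq_factMatrixT_row_zero {n : ℕ} {α : ℂ} (hn : 3 ≤ n) (hω1 : ‖ω 1‖ ≤ 1)
    (hω2 : ω 2 = 0) : ‖WithLp.toLp 2 (factMatrixT n ω α ⟨0, by omega⟩)‖ ^ 2 = 1 + ‖α‖ ^ 2 := by
  obtain ⟨m, rfl⟩ : ∃ m, n = m + 3 := ⟨n - 3, by omega⟩
  have hmid : ∀ x : Fin m, factMatrixT (m + 3) ω α 0 x.castSucc.succ.succ = 0 := by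
    intro x
    have hprod : ∏ k ∈ Ico 2 ((x : ℕ) + 1 + 1 + 1), -conj (ω k) = 0 :=
      prod_eq_zero (i := 2) (mem_Ico.2 (by omega)) (by simp [hω2])
    simp [factMatrixT, x.isLt.ne, hprod]
  rw [EuclideanSpace.norm_sq_eq, Fin.sum_univ_succ, Fin.sum_univ_succ, Fin.sum_univ_castSucc]
  simp only [Fin.zero_eta, hmid]
  simp [factMatrixT, hω2, Fin.pos_iff_ne_zero, ← add_assoc,
    Real.sq_sqrt (by nlinarith [norm_nonneg (ω 1)] : (0:ℝ) ≤ 1 - ‖ω 1‖ ^ 2)]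
end Model

/-- Fact 2: if `ω₂ = 0`, the matrix which agrees with the model matrix except possibly at the
top-right corner (where the entry is `α`) is a contraction iff `α = 0`. -/
theorem contraction_iff_corner_zero (n : ℕ) (hn : 3 ≤ n) (ω : ℕ → ℂ)
    (hω : ∀ k, 1 ≤ k → k ≤ n → ‖ω k‖ < 1) (hω2 : ω 2 = 0) (α : ℂ) :
    ‖Matrix.toEuclideanCLM (𝕜 := ℂ) (factMatrixT n ω α)‖ ≤ 1 ↔ α = 0 := by
  constructor
  · intro hT
    have hrow : ‖WithLp.toLp 2 (factMatrixT n ω α ⟨0, by omega⟩)‖ ^ 2 ≤ 1 :=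
      pow_le_one₀ (norm_nonneg _) ((Matrix.norm_row_le_norm_toEuclideanCLM _ _).trans hT)
    rw [norm_sq_factMatrixT_row_zero hn (hω 1 le_rfl (by omega)).le hω2] at hrow
    exact norm_eq_zero.1 (by nlinarith [norm_nonneg α])
  · rintro rfl
    rw [factMatrixT_zero_eq_submatrix hn hω2]
    refine Matrix.norm_toEuclideanCLM_submatrix_le_one ?_ (Fin.succ_injective n)
    refine conjTranspose_mul_self_extendedModel (Function.update_self _ _ _) fun k hk => ?_
    rcases k.eq_zero_or_pos with rfl | hk0
    · simp
    · rw [Function.update_of_ne hk0.ne']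
      exact (hω k hk0 hk).le
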